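/- arXiv:1708.08499 — 11 statements merged into one kernel-verified Lean document; each statement's English description precedes it below -/
import Mathlib

section
/- Let A and B be multialgebras over a signature Σ, and let f : |A| → |B| be a function. Then f is an epimorphism from A to B in the category MAlg(Σ) if and only if f is a homomorphism of multialgebras which is a surjective function. -/
universe u v w u₂

/-- A multialgebra (hyperalgebra, non-deterministic algebra) over a signature `σ`,
where `σ n` is the set of `n`-ary operator symbols: each operator is interpreted as a
multioperation taking values in the nonempty subsets of the (nonempty) support. -/
structure MultiAlg (σ : ℕ → Type v) : Type (max (u + 1) v) where
  carrier : Type u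
  nonempty : Nonempty carrier
  op : ∀ {n : ℕ}, σ n → (Fin n → carrier) → Set carrier
  op_nonempty : ∀ {n : ℕ} (c : σ n) (a : Fin n → carrier), (op c a).Nonempty

namespace MultiAlg

variable {σ : ℕ → Type v}

/-- Homomorphism of multialgebras: `f[c^A(ā)] ⊆ c^B(f ∘ ā)`. -/
def IsHom (A : MultiAlg.{u} σ) (B : MultiAlg.{u₂} σ) (f : A.carrier → B.carrier) : Prop :=
  ∀ {n : ℕ} (c : σ n) (a : Fin n → A.carrier), f '' A.op c a ⊆ B.op c (f ∘ a)

/-- Full homomorphism of multialgebras: `f[c^A(ā)] = c^B(f ∘ ā)`. -/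
def IsFullHom (A : MultiAlg.{u} σ) (B : MultiAlg.{u₂} σ) (f : A.carrier → B.carrier) : Prop :=
  ∀ {n : ℕ} (c : σ n) (a : Fin n → A.carrier), f '' A.op c a = B.op c (f ∘ a)

/-- Isomorphism in the category `MAlg(σ)`: a homomorphism with a two-sided
inverse homomorphism. -/
def IsIso (A : MultiAlg.{u} σ) (B : MultiAlg.{u₂} σ) (f : A.carrier → B.carrier) : Prop :=
  IsHom A B f ∧ ∃ g : B.carrier → A.carrier,
    IsHom B A g ∧ Function.LeftInverse g f ∧ Function.RightInverse g f

/-- Monomorphism in the category `MAlg(σ)`: a homomorphism which is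
left-cancellable with respect to homomorphisms. -/
def IsMono (A : MultiAlg.{u} σ) (B : MultiAlg.{u₂} σ) (f : A.carrier → B.carrier) : Prop :=
  IsHom A B f ∧ ∀ (C : MultiAlg.{w} σ) (g h : C.carrier → A.carrier),
    IsHom C A g → IsHom C A h → f ∘ g = f ∘ h → g = h

/-- Epimorphism in the category `MAlg(σ)`: a homomorphism which is
right-cancellable with respect to homomorphisms. -/
def IsEpi (A : MultiAlg.{u} σ) (B : MultiAlg.{u₂} σ) (f : A.carrier → B.carrier) : Prop :=
  IsHom A B f ∧ ∀ (C : MultiAlg.{w} σ) (g h : B.carrier → C.carrier),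
    IsHom B C g → IsHom B C h → g ∘ f = h ∘ f → g = h

/-- The product of a family of multialgebras. -/
def pi {I : Type w} (F : I → MultiAlg.{u} σ) : MultiAlg.{max u w} σ where
  carrier := ∀ i, (F i).carrier
  nonempty := ⟨fun i => Classical.choice (F i).nonempty⟩
  op := fun {n} c a => {x | ∀ i, x i ∈ (F i).op c fun k => a k i}
  op_nonempty := fun {n} c a =>
    ⟨fun i => ((F i).op_nonempty c fun k => a k i).choose,
      fun i => ((F i).op_nonempty c fun k => a k i).choose_spec⟩

/-- The one-element multialgebra. -/
def one (σ : ℕ → Type v) : MultiAlg.{u} σ where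
  carrier := PUnit
  nonempty := ⟨PUnit.unit⟩
  op := fun _ _ => {PUnit.unit}
  op_nonempty := fun _ _ => ⟨PUnit.unit, rfl⟩

/-- The direct image of a function between (the supports of) two multialgebras,
as a submultialgebra of the codomain:
`c^{f(A)}(b̄) = ⋃ { f[c^A(ā)] : ā ∈ f⁻¹(b̄) }`. -/
def dirIm (A : MultiAlg.{u} σ) (B : MultiAlg.{u₂} σ) (f : A.carrier → B.carrier) :
    MultiAlg.{u₂} σ where
  carrier := ↥(Set.range f)
  nonempty := ⟨⟨f (Classical.choice A.nonempty), Set.mem_range_self _⟩⟩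
  op := fun {n} c b => {y | ∃ a : Fin n → A.carrier,
    (∀ i, f (a i) = (b i : B.carrier)) ∧ (y : B.carrier) ∈ f '' A.op c a}
  op_nonempty := by
    intro n c b
    choose a ha using fun i => (b i).2
    obtain ⟨x, hx⟩ := A.op_nonempty c a
    exact ⟨⟨f x, Set.mem_range_self x⟩, a, ha, x, hx, rfl⟩

/-- The corestriction `f̄ : A → f(A)` of `f` to the direct image. -/
def corestrict (A : MultiAlg.{u} σ) (B : MultiAlg.{u₂} σ) (f : A.carrier → B.carrier) :
    A.carrier → (dirIm A B f).carrier :=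
  fun x => ⟨f x, Set.mem_range_self x⟩

/-- The inclusion `g : f(A) → B` of the direct image in the codomain. -/
def dirImIncl (A : MultiAlg.{u} σ) (B : MultiAlg.{u₂} σ) (f : A.carrier → B.carrier) :
    (dirIm A B f).carrier → B.carrier :=
  fun y => y.val

/-- A multicongruence over a multialgebra. -/
structure IsMulticongruence (A : MultiAlg.{u} σ) (r : A.carrier → A.carrier → Prop) : Prop where
  equivalence : Equivalence r
  compat : ∀ {n : ℕ} (c : σ n) (a b : Fin n → A.carrier), (∀ i, r (a i) (b i)) →
    ∀ x ∈ A.op c a, ∃ y ∈ A.op c b, r x y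
  const : ∀ (c : σ 0) (a : Fin 0 → A.carrier) (x y : A.carrier),
    x ∈ A.op c a → y ∈ A.op c a → r x y

/-- The quotient multialgebra of `A` modulo a relation `r`:
`c^{A/Θ}(a₁/Θ, …, aₙ/Θ) = { a/Θ : a ∈ c^A(ā) }` (taking the union over all
representatives, which is irrelevant when `r` is a multicongruence). -/
def quotAlg (A : MultiAlg.{u} σ) (r : A.carrier → A.carrier → Prop) : MultiAlg.{u} σ where
  carrier := Quot r
  nonempty := A.nonempty.map (Quot.mk r)
  op := fun {n} c q => {y | ∃ a : Fin n → A.carrier,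
    (∀ i, Quot.mk r (a i) = q i) ∧ ∃ x ∈ A.op c a, y = Quot.mk r x}
  op_nonempty := by
    intro n c q
    choose a ha using fun i => Quot.exists_rep (q i)
    obtain ⟨x, hx⟩ := A.op_nonempty c a
    exact ⟨Quot.mk r x, a, ha, x, hx, rfl⟩

end MultiAlg

theorem epi_iff_surjective_hom {σ : ℕ → Type v} (A : MultiAlg.{u} σ) (B : MultiAlg.{u₂} σ)
    (f : A.carrier → B.carrier) :
    MultiAlg.IsEpi A B f ↔ MultiAlg.IsHom A B f ∧ Function.Surjective f := by
  constructor
  · rintro ⟨hf, hcancel⟩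
    refine ⟨hf, ?_⟩
    -- test object: full multialgebra on `ULift Prop`
    set C : MultiAlg σ :=
      { carrier := ULift Prop
        nonempty := ⟨⟨True⟩⟩
        op := fun _ _ => Set.univ
        op_nonempty := fun _ _ => ⟨⟨True⟩, trivial⟩ } with hC
    have hgh : (fun b => (⟨b ∈ Set.range f⟩ : ULift Prop)) =
        (fun _ => (⟨True⟩ : ULift Prop)) := by
      apply hcancel C _ _
      · intro n c a x hx
        exact Set.mem_univ _
      · intro n c a x hx
        exact Set.mem_univ _
      · funext a
        simp only [Function.comp]
        exact congrArg ULift.up (propext (iff_true_intro ⟨a, rfl⟩))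
    intro b
    have := congrFun hgh b
    have h2 : (b ∈ Set.range f) = True := congrArg ULift.down this
    exact of_eq_true h2
  · rintro ⟨hf, hsurj⟩
    refine ⟨hf, fun C g h _ _ hgh => ?_⟩
    funext b
    obtain ⟨a, rfl⟩ := hsurj b
    exact congrFun hgh a
end

section
/- Let f : A → B be a homomorphism of multialgebras over Σ. Let f̄ : |A| → f[|A|] be the corestriction of f and let g : f[|A|] → |B| be the inclusion map. Then f̄ : A → f(A) and g : f(A) → B are homomorphisms of multialgebras such that f̄ is an epimorphism in MAlg(Σ), g is a monomorphism in MAlg(Σ), and f = g ∘ f̄, where f(A) is the direct image of f. Moreover, if f is injective as a function then f̄ is an isomorphism in MAlg(Σ). -/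
universe u v w u₂

theorem epi_mono_factorization {σ : ℕ → Type v} (A : MultiAlg.{u} σ) (B : MultiAlg.{u₂} σ)
    (f : A.carrier → B.carrier) (hf : MultiAlg.IsHom A B f) :
    MultiAlg.IsHom A (MultiAlg.dirIm A B f) (MultiAlg.corestrict A B f) ∧
    MultiAlg.IsHom (MultiAlg.dirIm A B f) B (MultiAlg.dirImIncl A B f) ∧
    MultiAlg.IsEpi A (MultiAlg.dirIm A B f) (MultiAlg.corestrict A B f) ∧
    MultiAlg.IsMono (MultiAlg.dirIm A B f) B (MultiAlg.dirImIncl A B f) ∧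
    MultiAlg.dirImIncl A B f ∘ MultiAlg.corestrict A B f = f ∧
    (Function.Injective f →
      MultiAlg.IsIso A (MultiAlg.dirIm A B f) (MultiAlg.corestrict A B f)) := by
  have hcor : MultiAlg.IsHom A (MultiAlg.dirIm A B f) (MultiAlg.corestrict A B f) := by
    rintro n c a y ⟨x, hx, rfl⟩
    exact ⟨a, fun i => rfl, x, hx, rfl⟩
  have hincl : MultiAlg.IsHom (MultiAlg.dirIm A B f) B (MultiAlg.dirImIncl A B f) := by
    rintro n c b y ⟨⟨yv, hyv⟩, ⟨a, ha, hy⟩, rfl⟩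
    have := hf c a hy
    rwa [show f ∘ a = MultiAlg.dirImIncl A B f ∘ b from funext ha] at this
  have hsurj : Function.Surjective (MultiAlg.corestrict A B f) := by
    rintro ⟨y, x, rfl⟩; exact ⟨x, rfl⟩
  refine ⟨hcor, hincl, ⟨hcor, fun C g h _ _ hgh => ?_⟩,
    ⟨hincl, fun C g h _ _ hgh => ?_⟩, rfl, fun hinj => ?_⟩
  · funext y
    obtain ⟨x, rfl⟩ := hsurj y
    exact congrFun hgh x
  · funext x
    exact Subtype.ext (congrFun hgh x)
  · refine ⟨hcor, fun y => Classical.choose y.2, ?_, ?_, ?_⟩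
    · rintro n c b z ⟨y, ⟨a, ha, x, hx, hyx⟩, rfl⟩
      have hy : f (Classical.choose y.2) = y.1 := Classical.choose_spec y.2
      have h1 : Classical.choose y.2 = x := hinj (hy.trans hyx.symm)
      have harg : ((fun y => Classical.choose y.2) ∘ b) = a := by
        funext i
        exact hinj ((Classical.choose_spec (b i).2).trans (ha i).symm)
      show Classical.choose y.2 ∈ A.op c _
      rw [harg, h1]
      exact hx
    · intro x
      exact hinj (Classical.choose_spec (MultiAlg.corestrict A B f x).2)
    · intro y
      exact Subtype.ext (Classical.choose_spec y.2)
end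

section
/- Let A = ⟨A, ∧, ∨, →⟩ be a classical implicative lattice and let A* = A × {0,1} with operations defined by: (a,1)#(b,1) = (a#b,1) for # ∈ {∧,∨,→}; (a,1)∧(b,0) = (b,0)∧(a,1) = (a→b, 0); (a,0)∧(b,0) = (a∨b, 0); (a,1)∨(b,0) = (b,0)∨(a,1) = (b→a, 1); (a,0)∨(b,0) = (a∧b, 0); (a,1)→(b,0) = (a∧b, 0); (a,0)→(b,1) = (a∨b, 1); (a,0)→(b,0) = (b→a, 1). Then the structure A* = ⟨A×{0,1}, ∧, ∨, →, 0*, 1*⟩ with 0* = (1,0) and 1* = (1,1) is a Boolean algebra. -/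
universe u u₂

-- Star (twist) operations on `A × {0,1}` over a classical implicative lattice `A`.
section Star
variable {A : Type u} [GeneralizedHeytingAlgebra A]

/-- The meet of the Boolean extension `A* = A × {0,1}`. -/
def starInf : A × Bool → A × Bool → A × Bool
  | (a, true), (b, true) => (a ⊓ b, true)
  | (a, true), (b, false) => (a ⇨ b, false)
  | (a, false), (b, true) => (b ⇨ a, false)
  | (a, false), (b, false) => (a ⊔ b, false)

/-- The join of the Boolean extension `A* = A × {0,1}`. -/
def starSup : A × Bool → A × Bool → A × Bool
  | (a, true), (b, true) => (a ⊔ b, true)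
  | (a, true), (b, false) => (b ⇨ a, true)
  | (a, false), (b, true) => (a ⇨ b, true)
  | (a, false), (b, false) => (a ⊓ b, false)

/-- The implication of the Boolean extension `A* = A × {0,1}`. -/
def starHimp : A × Bool → A × Bool → A × Bool
  | (a, true), (b, true) => (a ⇨ b, true)
  | (a, true), (b, false) => (a ⊓ b, false)
  | (a, false), (b, true) => (a ⊔ b, true)
  | (a, false), (b, false) => (b ⇨ a, true)

end Star

section Classical
variable {A : Type u} [GeneralizedHeytingAlgebra A]

theorem starInf_comm' (x y : A × Bool) : starInf x y = starInf y x := by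
  rcases x with ⟨a, _ | _⟩ <;> rcases y with ⟨b, _ | _⟩ <;>
    simp [starInf, inf_comm, sup_comm]

theorem starSup_comm' (x y : A × Bool) : starSup x y = starSup y x := by
  rcases x with ⟨a, _ | _⟩ <;> rcases y with ⟨b, _ | _⟩ <;>
    simp [starSup, inf_comm, sup_comm]

theorem star_sup_idem (x : A × Bool) : starSup x x = x := by
  rcases x with ⟨a, _ | _⟩ <;> simp [starSup]

theorem star_himp_eq (x y : A × Bool) : starHimp x y = starSup y (x.1, !x.2) := by
  rcases x with ⟨a, _ | _⟩ <;> rcases y with ⟨b, _ | _⟩ <;>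
    simp [starHimp, starSup, inf_comm, sup_comm]

variable (hcl : ∀ a b : A, a ⊔ (a ⇨ b) = ⊤)
include hcl

theorem cl_himp_sup (a b c : A) : a ⇨ (b ⊔ c) = (a ⇨ b) ⊔ c := by
  apply le_antisymm
  · have h : a ⇨ (b ⊔ c) = (a ⇨ (b ⊔ c)) ⊓ (a ⊔ (a ⇨ b)) := by rw [hcl a b, inf_top_eq]
    rw [h, inf_sup_left]
    apply sup_le
    · exact le_trans (by rw [inf_comm]; exact inf_himp_le)
        (sup_le (le_sup_of_le_left le_himp) le_sup_right)
    · exact le_sup_of_le_left inf_le_right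
  · exact sup_le (himp_le_himp le_rfl le_sup_left)
      (le_himp_iff.2 (le_trans inf_le_left le_sup_right))

theorem cl_himp_himp (a b c : A) : (a ⇨ b) ⇨ c = (a ⊔ c) ⊓ (b ⇨ c) := by
  apply le_antisymm
  · apply le_inf
    · have h : (a ⇨ b) ⇨ c = ((a ⇨ b) ⇨ c) ⊓ (a ⊔ (a ⇨ b)) := by rw [hcl a b, inf_top_eq]
      rw [h, inf_sup_left]
      exact sup_le (le_sup_of_le_left inf_le_right)
        (le_sup_of_le_right (by rw [inf_comm]; exact inf_himp_le))
    · exact himp_le_himp le_himp le_rfl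
  · rw [le_himp_iff, inf_right_comm, inf_sup_right, inf_sup_right]
    apply sup_le
    · exact le_trans (inf_le_inf_right _ inf_himp_le) inf_himp_le
    · exact le_trans inf_le_left inf_le_left

theorem cl_peirce (a b : A) : (a ⇨ b) ⇨ a = a := by
  rw [cl_himp_himp hcl, sup_idem, inf_eq_left]
  exact le_himp

theorem starInf_assoc' (x y z : A × Bool) :
    starInf (starInf x y) z = starInf x (starInf y z) := by
  rcases x with ⟨a, _ | _⟩ <;> rcases y with ⟨b, _ | _⟩ <;> rcases z with ⟨c, _ | _⟩ <;>
      simp only [starInf, Prod.mk.injEq, and_true]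
  · exact sup_assoc a b c
  · rw [sup_comm a b, cl_himp_sup hcl c b a, sup_comm]
  · rw [← cl_himp_sup hcl b a c, sup_comm a c, cl_himp_sup hcl b c a, sup_comm]
  · rw [himp_left_comm, himp_himp]
  · exact (cl_himp_sup hcl a b c).symm
  · exact himp_left_comm c a b
  · exact (himp_himp a b c).symm
  · exact inf_assoc a b c

theorem starSup_assoc' (x y z : A × Bool) :
    starSup (starSup x y) z = starSup x (starSup y z) := by
  rcases x with ⟨a, _ | _⟩ <;> rcases y with ⟨b, _ | _⟩ <;> rcases z with ⟨c, _ | _⟩ <;>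
      simp only [starSup, Prod.mk.injEq, and_true]
  · exact inf_assoc a b c
  · exact (himp_himp a b c).symm
  · exact himp_left_comm c a b
  · exact (cl_himp_sup hcl a b c).symm
  · rw [himp_left_comm, himp_himp]
  · rw [← cl_himp_sup hcl b a c, sup_comm a c, cl_himp_sup hcl b c a, sup_comm]
  · rw [sup_comm a b, cl_himp_sup hcl c b a, sup_comm]
  · exact sup_assoc a b c

theorem star_sup_inf_self (x y : A × Bool) : starSup x (starInf x y) = x := by
  rcases x with ⟨a, _ | _⟩ <;> rcases y with ⟨b, _ | _⟩ <;>
      simp only [starInf, starSup, Prod.mk.injEq, and_true]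
  · exact inf_sup_self
  · exact inf_eq_left.mpr le_himp
  · exact cl_peirce hcl a b
  · exact sup_inf_self

theorem star_inf_sup_self (x y : A × Bool) : starInf x (starSup x y) = x := by
  rcases x with ⟨a, _ | _⟩ <;> rcases y with ⟨b, _ | _⟩ <;>
      simp only [starInf, starSup, Prod.mk.injEq, and_true]
  · exact sup_inf_self
  · exact cl_peirce hcl a b
  · exact inf_eq_left.mpr le_himp
  · exact inf_sup_self

theorem star_inf_sup_dist (x y z : A × Bool) :
    starInf x (starSup y z) = starSup (starInf x y) (starInf x z) := by
  rcases x with ⟨a, _ | _⟩ <;> rcases y with ⟨b, _ | _⟩ <;> rcases z with ⟨c, _ | _⟩ <;>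
      simp only [starInf, starSup, Prod.mk.injEq, and_true]
  · exact sup_inf_left a b c
  · rw [cl_himp_himp hcl, sup_comm b a]
  · rw [cl_himp_himp hcl, sup_comm c a, inf_comm]
  · exact sup_himp_distrib b c a
  · exact himp_inf_distrib a b c
  · rw [cl_himp_himp hcl, sup_inf_self, himp_inf_distrib, ← inf_assoc,
      inf_eq_left.mpr (le_himp : a ≤ b ⇨ a)]
  · rw [cl_himp_himp hcl, sup_inf_self, himp_inf_distrib, ← inf_assoc,
      inf_eq_left.mpr (le_himp : a ≤ c ⇨ a)]
  · exact inf_sup_left a b c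

end Classical

theorem star_is_boolean (A : Type u) [GeneralizedHeytingAlgebra A]
    (hcl : ∀ a b : A, a ⊔ (a ⇨ b) = ⊤) :
    ∃ B : BooleanAlgebra (A × Bool),
      (∀ x y : A × Bool, B.inf x y = starInf x y) ∧
      (∀ x y : A × Bool, B.sup x y = starSup x y) ∧
      (∀ x y : A × Bool, B.himp x y = starHimp x y) ∧
      B.bot = (⊤, false) ∧ B.top = (⊤, true) := by
  letI L : Lattice (A × Bool) :=
    @Lattice.mk' _ ⟨starSup⟩ ⟨starInf⟩ starSup_comm' (starSup_assoc' hcl)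
      starInf_comm' (starInf_assoc' hcl) (star_sup_inf_self hcl) (star_inf_sup_self hcl)
  letI D : DistribLattice (A × Bool) :=
    @DistribLattice.ofInfSupLe _ L (fun x y z =>
      show starSup (starInf x (starSup y z)) (starSup (starInf x y) (starInf x z))
          = starSup (starInf x y) (starInf x z) by
        rw [star_inf_sup_dist hcl]; exact star_sup_idem _)
  letI B : BooleanAlgebra (A × Bool) :=
    { D with
      compl := fun x => (x.1, !x.2)
      himp := starHimp
      sdiff := fun x y => starInf x (y.1, !y.2)
      top := ((⊤ : A), true)
      bot := ((⊤ : A), false)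
      inf_compl_le_bot := fun x =>
        show starSup (starInf x (x.1, !x.2)) ((⊤ : A), false) = ((⊤ : A), false) by
          rcases x with ⟨a, _ | _⟩ <;> simp [starInf, starSup]
      top_le_sup_compl := fun x =>
        show starSup ((⊤ : A), true) (starSup x (x.1, !x.2)) = starSup x (x.1, !x.2) by
          rcases x with ⟨a, _ | _⟩ <;> simp [starSup]
      le_top := fun x =>
        show starSup x ((⊤ : A), true) = ((⊤ : A), true) by
          rcases x with ⟨a, _ | _⟩ <;> simp [starSup]
      bot_le := fun x =>
        show starSup ((⊤ : A), false) x = x by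
          rcases x with ⟨a, _ | _⟩ <;> simp [starSup]
      himp_eq := star_himp_eq
      sdiff_eq := fun _ _ => rfl }
  exact ⟨B, fun _ _ => rfl, fun _ _ => rfl, fun _ _ => rfl, rfl, rfl⟩
end

section
/- Let A be a classical implicative lattice and A* its Boolean-algebra extension on A × {0,1}. (1) The map i* : A → A* given by i*(a) = (a,1) is an injective homomorphism of classical implicative lattices (it preserves ∧, ∨ and →). (2) The pair (A*, i*) has the universal property: for every Boolean algebra A' and every homomorphism of classical implicative lattices h : A → A' (preserving ∧, ∨, →), there exists a unique homomorphism of Boolean algebras h* : A* → A' such that h = h* ∘ i*. -/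
universe u u₂

theorem star_universal_property (A : Type u) [GeneralizedHeytingAlgebra A]
    (hcl : ∀ a b : A, a ⊔ (a ⇨ b) = ⊤) :
    Function.Injective (fun a : A => ((a, true) : A × Bool)) ∧
    (∀ a b : A, starInf (a, true) (b, true) = (a ⊓ b, true) ∧
      starSup (a, true) (b, true) = (a ⊔ b, true) ∧
      starHimp (a, true) (b, true) = (a ⇨ b, true)) ∧
    ∀ (A' : Type u₂) [BooleanAlgebra A'] (h : A → A'),
      (∀ a b : A, h (a ⊓ b) = h a ⊓ h b) →
      (∀ a b : A, h (a ⊔ b) = h a ⊔ h b) →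
      (∀ a b : A, h (a ⇨ b) = h a ⇨ h b) →
      ∃! h' : A × Bool → A',
        ((∀ x y : A × Bool, h' (starInf x y) = h' x ⊓ h' y) ∧
         (∀ x y : A × Bool, h' (starSup x y) = h' x ⊔ h' y) ∧
         (∀ x y : A × Bool, h' (starHimp x y) = h' x ⇨ h' y) ∧
         h' (⊤, false) = ⊥ ∧ h' (⊤, true) = ⊤) ∧
        ∀ a : A, h' (a, true) = h a := by

  refine ⟨fun a b hab => by simpa using congrArg Prod.fst hab,
    fun a b => ⟨rfl, rfl, rfl⟩, ?_⟩
  intro A' _ h hinf hsup hhimp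
  have htop : h ⊤ = ⊤ := by
    have := hhimp ⊤ ⊤; simpa using this
  refine ⟨fun p => if p.2 then h p.1 else (h p.1)ᶜ, ⟨⟨?_, ?_, ?_, ?_, ?_⟩,
    fun a => rfl⟩, ?_⟩
  · rintro ⟨a, _ | _⟩ ⟨b, _ | _⟩ <;>
      simp [starInf, hinf, hsup, hhimp, himp_eq, compl_sup, compl_inf, inf_comm]
  · rintro ⟨a, _ | _⟩ ⟨b, _ | _⟩ <;>
      simp [starSup, hinf, hsup, hhimp, himp_eq, compl_sup, compl_inf, sup_comm]
  · rintro ⟨a, _ | _⟩ ⟨b, _ | _⟩ <;>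
      simp [starHimp, hinf, hsup, hhimp, himp_eq, compl_sup, compl_inf, sup_comm]
  · simp [htop]
  · simp [htop]
  · rintro g ⟨⟨gi, gs, gh, gbot, gtop⟩, gt⟩
    funext ⟨a, b⟩
    cases b with
    | true => simpa using gt a
    | false =>
        have h1 : starHimp (a, true) ((⊤ : A), false) = (a, false) := by
          simp [starHimp]
        have := gh (a, true) ((⊤ : A), false)
        rw [h1] at this
        simp only [this, gbot, gt, himp_bot]
        simp
end

section
/- (Adequacy of CPL+e with respect to swap structures.) For every set Γ ∪ {φ} of formulas over the signature Σ = {∧, ∨, →, ¬, ∘}: Γ ⊢_{CPL+e} φ if and only if Γ ⊨_{Mat(K_{CPL+e})} φ, i.e. for every swap structure B for CPL+e over a Boolean algebra and every valuation v over the Nmatrix M(B) with v[Γ] ⊆ D_B, it holds that v(φ) ∈ D_B. -/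
universe u v w u₂

/-- The signature `Σ = {∧, ∨, →, ¬, ∘}` of the logic mbC. -/
inductive SwapSig : ℕ → Type
  | and : SwapSig 2
  | or : SwapSig 2
  | imp : SwapSig 2
  | neg : SwapSig 1
  | circ : SwapSig 1

/-- The constraint on the first coordinate of the output of each multioperation
of a swap structure (computed in the underlying Boolean algebra). -/
def swapTgt {A : Type u} [BooleanAlgebra A] :
    ∀ {n : ℕ}, SwapSig n → (Fin n → A × A × A) → A
  | _, .and, a => (a 0).1 ⊓ (a 1).1
  | _, .or, a => (a 0).1 ⊔ (a 1).1
  | _, .imp, a => (a 0).1 ⇨ (a 1).1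
  | _, .neg, a => (a 0).2.1
  | _, .circ, a => (a 0).2.2

/-- A swap structure for CPL⁺ₑ over a Boolean algebra `A`: a multialgebra over the
signature `{∧, ∨, →, ¬, ∘}` whose domain is a set of triples (snapshots) in `A³`
containing some snapshot with first coordinate `0`, and whose (nonempty-valued)
multioperations satisfy
`∅ ≠ z # w ⊆ {u ∈ dom | u₁ = z₁ # w₁}` (for `# ∈ {∧,∨,→}`),
`∅ ≠ ¬z ⊆ {u ∈ dom | u₁ = z₂}` and `∅ ≠ ∘z ⊆ {u ∈ dom | u₁ = z₃}`. -/
structure SwapStr (A : Type u) [BooleanAlgebra A] : Type u where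
  dom : Set (A × A × A)
  op : ∀ {n : ℕ}, SwapSig n → (Fin n → A × A × A) → Set (A × A × A)
  fst_zero : ∃ z ∈ dom, z.1 = ⊥
  op_nonempty : ∀ {n : ℕ} (c : SwapSig n) (a : Fin n → A × A × A),
    (∀ i, a i ∈ dom) → (op c a).Nonempty
  op_sub : ∀ {n : ℕ} (c : SwapSig n) (a : Fin n → A × A × A), (∀ i, a i ∈ dom) →
    op c a ⊆ {u ∈ dom | u.1 = swapTgt c a}



namespace SwapStr

variable {A : Type u} [BooleanAlgebra A]

/-- The multialgebra over the signature `{∧, ∨, →, ¬, ∘}` underlying a swap structure. -/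
def toMultiAlg (S : SwapStr A) : MultiAlg SwapSig where
  carrier := ↥S.dom
  nonempty := by
    obtain ⟨z, hz, -⟩ := S.fst_zero
    exact ⟨⟨z, hz⟩⟩
  op := fun {n} c a => {u : ↥S.dom | (u : A × A × A) ∈ S.op c fun i => (a i : A × A × A)}
  op_nonempty := by
    intro n c a
    obtain ⟨x, hx⟩ := S.op_nonempty c (fun i => (a i : A × A × A)) fun i => (a i).2
    exact ⟨⟨x, (S.op_sub c _ (fun i => (a i).2) hx).1⟩, hx⟩

end SwapStr

/-- The universe of swap structures for mbC over `A`: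
`B_A^{mbC} = {z ∈ A³ : z₁ ∨ z₂ = 1 and z₁ ∧ z₂ ∧ z₃ = 0}`. -/
def BmbcSet (A : Type u) [BooleanAlgebra A] : Set (A × A × A) :=
  {z | z.1 ⊔ z.2.1 = ⊤ ∧ z.1 ⊓ z.2.1 ⊓ z.2.2 = ⊥}

/-- The universe of swap structures for mbCciw over `A`:
`B_A^{ciw} = {z ∈ B_A^{mbC} : z₃ ∨ (z₁ ∧ z₂) = 1}`. -/
def BciwSet (A : Type u) [BooleanAlgebra A] : Set (A × A × A) :=
  {z | z ∈ BmbcSet A ∧ z.2.2 ⊔ (z.1 ⊓ z.2.1) = ⊤}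

/-- The full swap structure for mbC over `A`, with domain `B_A^{mbC}` and maximal
multioperations. -/
def fullMbc (A : Type u) [BooleanAlgebra A] : SwapStr A where
  dom := BmbcSet A
  op := fun {n} c a => {u ∈ BmbcSet A | u.1 = swapTgt c a}
  fst_zero := ⟨(⊥, ⊤, ⊤), ⟨by simp, by simp⟩, rfl⟩
  op_nonempty := fun {n} c a _ =>
    ⟨(swapTgt c a, (swapTgt c a)ᶜ, ⊤), ⟨by simp, by simp⟩, rfl⟩
  op_sub := fun {n} c a _ => Set.Subset.refl _

/-- The full swap structure for CPL⁺ₑ over `A`, with domain `A³` and maximal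
multioperations. -/
def fullCPLe (A : Type u) [BooleanAlgebra A] : SwapStr A where
  dom := Set.univ
  op := fun {n} c a => {u | u.1 = swapTgt c a}
  fst_zero := ⟨(⊥, ⊥, ⊥), trivial, rfl⟩
  op_nonempty := fun {n} c a _ => ⟨(swapTgt c a, ⊥, ⊥), rfl⟩
  op_sub := fun {n} c a _ u hu => ⟨trivial, hu⟩

/-- The map `f⋆(z) = (f(z₁), f(z₂), f(z₃))` induced on full swap structures for mbC
by a Boolean algebra homomorphism `f`. -/
def mapMbc {A : Type u} {A' : Type u₂} [BooleanAlgebra A] [BooleanAlgebra A']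
    (f : BoundedLatticeHom A A') (z : ↥(BmbcSet A)) : ↥(BmbcSet A') :=
  ⟨(f z.1.1, f z.1.2.1, f z.1.2.2), by
    obtain ⟨h1, h2⟩ := z.2
    constructor
    · rw [← map_sup, h1, map_top]
    · rw [← map_inf, ← map_inf, h2, map_bot]⟩

/-- A bundled swap structure for mbC (an object of the category `SW_mbC`). -/
structure MbcSwap : Type (u + 1) where
  base : Type u
  [ba : BooleanAlgebra base]
  str : SwapStr base
  mbc : str.dom ⊆ BmbcSet base

attribute [instance] MbcSwap.ba

/-- Formulas of the logic mbC over the signature `Σ = {∧, ∨, →, ¬, ∘}`,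
generated by a denumerable set of propositional variables. -/
inductive Form : Type
  | var : ℕ → Form
  | and : Form → Form → Form
  | or : Form → Form → Form
  | imp : Form → Form → Form
  | neg : Form → Form
  | circ : Form → Form

/-- A valuation over the Nmatrix `M(S) = (S, D_S)` associated to a swap structure `S`,
where `D_S = {z ∈ dom S : z₁ = 1}`: a map `v` from formulas to the domain of `S` such
that the value of a compound formula belongs to the multioperation applied to the values
of its immediate subformulas. -/
structure IsSwapVal {A : Type u} [BooleanAlgebra A] (S : SwapStr A)
    (v : Form → A × A × A) : Prop where
  mem : ∀ φ, v φ ∈ S.dom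
  vand : ∀ φ ψ, v (φ.and ψ) ∈ S.op .and ![v φ, v ψ]
  vor : ∀ φ ψ, v (φ.or ψ) ∈ S.op .or ![v φ, v ψ]
  vimp : ∀ φ ψ, v (φ.imp ψ) ∈ S.op .imp ![v φ, v ψ]
  vneg : ∀ φ, v φ.neg ∈ S.op .neg ![v φ]
  vcirc : ∀ φ, v φ.circ ∈ S.op .circ ![v φ]

/-- Derivability in the Hilbert calculus CPL⁺ₑ (positive classical logic over the
signature `{∧, ∨, →, ¬, ∘}`, with no axioms or rules for `¬` and `∘`). -/
inductive CPLeDeriv : Set Form → Form → Prop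
  | prem {Γ : Set Form} {φ : Form} : φ ∈ Γ → CPLeDeriv Γ φ
  | ax1 (Γ : Set Form) (α β : Form) : CPLeDeriv Γ (α.imp (β.imp α))
  | ax2 (Γ : Set Form) (α β γ : Form) :
      CPLeDeriv Γ ((α.imp (β.imp γ)).imp ((α.imp β).imp (α.imp γ)))
  | ax3 (Γ : Set Form) (α β : Form) : CPLeDeriv Γ (α.imp (β.imp (α.and β)))
  | ax4 (Γ : Set Form) (α β : Form) : CPLeDeriv Γ ((α.and β).imp α)
  | ax5 (Γ : Set Form) (α β : Form) : CPLeDeriv Γ ((α.and β).imp β)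
  | ax6 (Γ : Set Form) (α β : Form) : CPLeDeriv Γ (α.imp (α.or β))
  | ax7 (Γ : Set Form) (α β : Form) : CPLeDeriv Γ (β.imp (α.or β))
  | ax8 (Γ : Set Form) (α β γ : Form) :
      CPLeDeriv Γ ((α.imp γ).imp ((β.imp γ).imp ((α.or β).imp γ)))
  | ax9 (Γ : Set Form) (α β : Form) : CPLeDeriv Γ ((α.imp β).or α)
  | mp {Γ : Set Form} {α β : Form} :
      CPLeDeriv Γ (α.imp β) → CPLeDeriv Γ α → CPLeDeriv Γ β

/-- Derivability in the Hilbert calculus mbC: CPL⁺ₑ plus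
Ax10 `α ∨ ¬α` and bc1 `∘α → (α → (¬α → β))`. -/
inductive MbcDeriv : Set Form → Form → Prop
  | prem {Γ : Set Form} {φ : Form} : φ ∈ Γ → MbcDeriv Γ φ
  | ax1 (Γ : Set Form) (α β : Form) : MbcDeriv Γ (α.imp (β.imp α))
  | ax2 (Γ : Set Form) (α β γ : Form) :
      MbcDeriv Γ ((α.imp (β.imp γ)).imp ((α.imp β).imp (α.imp γ)))
  | ax3 (Γ : Set Form) (α β : Form) : MbcDeriv Γ (α.imp (β.imp (α.and β)))
  | ax4 (Γ : Set Form) (α β : Form) : MbcDeriv Γ ((α.and β).imp α)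
  | ax5 (Γ : Set Form) (α β : Form) : MbcDeriv Γ ((α.and β).imp β)
  | ax6 (Γ : Set Form) (α β : Form) : MbcDeriv Γ (α.imp (α.or β))
  | ax7 (Γ : Set Form) (α β : Form) : MbcDeriv Γ (β.imp (α.or β))
  | ax8 (Γ : Set Form) (α β γ : Form) :
      MbcDeriv Γ ((α.imp γ).imp ((β.imp γ).imp ((α.or β).imp γ)))
  | ax9 (Γ : Set Form) (α β : Form) : MbcDeriv Γ ((α.imp β).or α)
  | ax10 (Γ : Set Form) (α : Form) : MbcDeriv Γ (α.or α.neg)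
  | bc1 (Γ : Set Form) (α β : Form) : MbcDeriv Γ (α.circ.imp (α.imp (α.neg.imp β)))
  | mp {Γ : Set Form} {α β : Form} :
      MbcDeriv Γ (α.imp β) → MbcDeriv Γ α → MbcDeriv Γ β

/-
Soundness: the first coordinates of a swap valuation form a valuation of the positive
connectives in a Boolean algebra, under which every axiom takes the value `⊤`.
Completeness: if `Γ ⊬ φ`, extend `Γ` by Zorn's lemma to a maximal `Δ` with `Δ ⊬ φ`. Such a `Δ` is
closed under derivation and prime, and Ax9 makes it behave classically on `→`. Its
characteristic function `t`, paired with `t (¬ψ)` and `t (∘ψ)` as the remaining coordinates, is a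
valuation over the full swap structure on the two-element algebra which is `⊤` on `Γ` but not on
`φ`: the connectives `¬` and `∘` impose no constraint besides copying these coordinates.
-/

namespace CPLeDeriv

variable {Γ Δ : Set Form} {φ ψ : Form}

@[elab_as_elim]
theorem closure_induction {motive : Form → Prop} (h : CPLeDeriv Γ φ)
    (prem : ∀ ψ ∈ Γ, motive ψ) (thm : ∀ ψ, (∀ Δ, CPLeDeriv Δ ψ) → motive ψ)
    (mp : ∀ ψ χ, motive (ψ.imp χ) → motive ψ → motive χ) : motive φ := by
  induction h with
  | prem hψ => exact prem _ hψ
  | ax1 α β => exact thm _ (ax1 · α β)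
  | ax2 α β γ => exact thm _ (ax2 · α β γ)
  | ax3 α β => exact thm _ (ax3 · α β)
  | ax4 α β => exact thm _ (ax4 · α β)
  | ax5 α β => exact thm _ (ax5 · α β)
  | ax6 α β => exact thm _ (ax6 · α β)
  | ax7 α β => exact thm _ (ax7 · α β)
  | ax8 α β γ => exact thm _ (ax8 · α β γ)
  | ax9 α β => exact thm _ (ax9 · α β)
  | mp _ _ ih₁ ih₂ => exact mp _ _ ih₁ ih₂

theorem mono (h : CPLeDeriv Γ φ) (hΓΔ : Γ ⊆ Δ) : CPLeDeriv Δ φ :=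
  h.closure_induction (fun _ hψ => prem (hΓΔ hψ)) (fun _ hψ => hψ Δ) fun _ _ => mp

theorem exists_finite_subset (h : CPLeDeriv Γ φ) :
    ∃ Γ₀ ⊆ Γ, Γ₀.Finite ∧ CPLeDeriv Γ₀ φ :=
  h.closure_induction
    (fun ψ hψ => ⟨{ψ}, Set.singleton_subset_iff.2 hψ, Set.finite_singleton ψ, prem rfl⟩)
    (fun _ hψ => ⟨∅, Set.empty_subset Γ, Set.finite_empty, hψ ∅⟩)
    fun _ _ ⟨Γ₁, hΓ₁, hfin₁, h₁⟩ ⟨Γ₂, hΓ₂, hfin₂, h₂⟩ =>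
      ⟨Γ₁ ∪ Γ₂, Set.union_subset hΓ₁ hΓ₂, hfin₁.union hfin₂,
        mp (h₁.mono Set.subset_union_left) (h₂.mono Set.subset_union_right)⟩

theorem imp_self (Γ : Set Form) (ψ : Form) : CPLeDeriv Γ (ψ.imp ψ) :=
  mp (mp (ax2 Γ ψ (ψ.imp ψ) ψ) (ax1 Γ ψ (ψ.imp ψ))) (ax1 Γ ψ ψ)

theorem deduction (h : CPLeDeriv (insert ψ Γ) φ) : CPLeDeriv Γ (ψ.imp φ) :=
  h.closure_induction
    (fun χ hχ => hχ.elim (fun hχψ => hχψ ▸ imp_self Γ ψ) fun hχ => mp (ax1 Γ χ ψ) (prem hχ))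
    (fun χ hχ => mp (ax1 Γ χ ψ) (hχ Γ))
    fun χ θ h₁ h₂ => mp (mp (ax2 Γ ψ χ θ) h₁) h₂

end CPLeDeriv

namespace IsSwapVal

variable {A : Type u} [BooleanAlgebra A] {S : SwapStr A} {v : Form → A × A × A}

theorem mem_pair (hv : IsSwapVal S v) (φ ψ : Form) : ∀ i, ![v φ, v ψ] i ∈ S.dom :=
  Fin.forall_fin_two.2 ⟨hv.mem φ, hv.mem ψ⟩

theorem fst_and (hv : IsSwapVal S v) (φ ψ : Form) : (v (φ.and ψ)).1 = (v φ).1 ⊓ (v ψ).1 :=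
  (S.op_sub .and _ (hv.mem_pair φ ψ) (hv.vand φ ψ)).2

theorem fst_or (hv : IsSwapVal S v) (φ ψ : Form) : (v (φ.or ψ)).1 = (v φ).1 ⊔ (v ψ).1 :=
  (S.op_sub .or _ (hv.mem_pair φ ψ) (hv.vor φ ψ)).2

theorem fst_imp (hv : IsSwapVal S v) (φ ψ : Form) : (v (φ.imp ψ)).1 = (v φ).1 ⇨ (v ψ).1 :=
  (S.op_sub .imp _ (hv.mem_pair φ ψ) (hv.vimp φ ψ)).2

end IsSwapVal

theorem CPLeDeriv.sound {A : Type u} [BooleanAlgebra A] {S : SwapStr A}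
    {v : Form → A × A × A} {Γ : Set Form} {φ : Form} (h : CPLeDeriv Γ φ)
    (hv : IsSwapVal S v) (hΓ : ∀ γ ∈ Γ, (v γ).1 = ⊤) : (v φ).1 = ⊤ := by
  induction h with
  | prem hφ => exact hΓ _ hφ
  | mp _ _ ih₁ ih₂ => rwa [hv.fst_imp, ih₂, top_himp] at ih₁
  | ax2 α β γ =>
    simp only [hv.fst_imp, himp_eq_top_iff]
    rw [le_himp_iff, ← himp_inf_distrib, himp_inf_self]
    exact himp_le_himp_left inf_le_left
  | ax8 α β γ => simp [hv.fst_imp, hv.fst_or, sup_himp_distrib]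
  | ax9 α β => simp [hv.fst_imp, hv.fst_or, himp_eq, sup_assoc]
  | _ => simp [hv.fst_imp, hv.fst_and, hv.fst_or]

def IsSaturated (φ : Form) (Δ : Set Form) : Prop :=
  ¬ CPLeDeriv Δ φ ∧ ∀ ψ ∉ Δ, CPLeDeriv (insert ψ Δ) φ

theorem exists_isSaturated_superset {Γ : Set Form} {φ : Form} (h : ¬ CPLeDeriv Γ φ) :
    ∃ Δ, Γ ⊆ Δ ∧ IsSaturated φ Δ := by
  set F := {Δ | Γ ⊆ Δ ∧ ¬ CPLeDeriv Δ φ}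
  -- A derivation uses finitely many premises, which all lie in one member of a chain.
  have hF : ∀ c ⊆ F, IsChain (· ⊆ ·) c → c.Nonempty → ∃ ub ∈ F, ∀ Δ ∈ c, Δ ⊆ ub := by
    rintro c hc hchain ⟨Δ, hΔ⟩
    refine ⟨⋃₀ c, ⟨(hc hΔ).1.trans (Set.subset_sUnion_of_mem hΔ), fun hφ => ?_⟩,
      fun _ => Set.subset_sUnion_of_mem⟩
    obtain ⟨Γ₀, hΓ₀, hfin, hφ₀⟩ := hφ.exists_finite_subset
    obtain ⟨Δ', hΔ', hΓ₀Δ'⟩ :=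
      hchain.directedOn.exists_mem_subset_of_finite_of_subset_sUnion ⟨Δ, hΔ⟩ hfin hΓ₀
    exact (hc hΔ').2 (hφ₀.mono hΓ₀Δ')
  obtain ⟨Δ, hΓΔ, hΔ⟩ := zorn_subset_nonempty F hF Γ ⟨subset_rfl, h⟩
  refine ⟨Δ, hΓΔ, hΔ.prop.2, fun ψ hψ => of_not_not fun hψφ => hψ ?_⟩
  exact hΔ.mem_of_prop_insert ⟨hΔ.prop.1.trans (Set.subset_insert ψ Δ), hψφ⟩

namespace IsSaturated

variable {Δ : Set Form} {φ ψ χ : Form}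

theorem mem_of_deriv (hΔ : IsSaturated φ Δ) (hψ : CPLeDeriv Δ ψ) : ψ ∈ Δ :=
  of_not_not fun hψΔ => hΔ.1 (.mp (hΔ.2 ψ hψΔ).deduction hψ)

theorem and_mem_iff (hΔ : IsSaturated φ Δ) : ψ.and χ ∈ Δ ↔ ψ ∈ Δ ∧ χ ∈ Δ :=
  ⟨fun h => ⟨hΔ.mem_of_deriv (.mp (.ax4 Δ ψ χ) (.prem h)),
      hΔ.mem_of_deriv (.mp (.ax5 Δ ψ χ) (.prem h))⟩,
    fun ⟨hψ, hχ⟩ => hΔ.mem_of_deriv (.mp (.mp (.ax3 Δ ψ χ) (.prem hψ)) (.prem hχ))⟩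

theorem or_mem_iff (hΔ : IsSaturated φ Δ) : ψ.or χ ∈ Δ ↔ ψ ∈ Δ ∨ χ ∈ Δ := by
  refine ⟨fun h => ?_, fun h => h.elim (fun hψ => hΔ.mem_of_deriv (.mp (.ax6 Δ ψ χ) (.prem hψ)))
    fun hχ => hΔ.mem_of_deriv (.mp (.ax7 Δ ψ χ) (.prem hχ))⟩
  by_contra! hn
  exact hΔ.1 (.mp (.mp (.mp (.ax8 Δ ψ χ φ) (hΔ.2 ψ hn.1).deduction) (hΔ.2 χ hn.2).deduction)
    (.prem h))

theorem imp_mem_iff (hΔ : IsSaturated φ Δ) : ψ.imp χ ∈ Δ ↔ (ψ ∈ Δ → χ ∈ Δ) := by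
  refine ⟨fun h hψ => hΔ.mem_of_deriv (.mp (.prem h) (.prem hψ)), fun h => ?_⟩
  rcases hΔ.or_mem_iff.1 (hΔ.mem_of_deriv (.ax9 Δ ψ χ)) with hψχ | hψ
  · exact hψχ
  · exact hΔ.mem_of_deriv (.mp (.ax1 Δ χ ψ) (.prem (h hψ)))

end IsSaturated

def snapshotVal {A : Type u} (t : Form → A) (ψ : Form) : A × A × A :=
  (t ψ, t ψ.neg, t ψ.circ)

theorem isSwapVal_fullCPLe_snapshotVal {A : Type u} [BooleanAlgebra A] {t : Form → A}
    (hand : ∀ φ ψ, t (φ.and ψ) = t φ ⊓ t ψ) (hor : ∀ φ ψ, t (φ.or ψ) = t φ ⊔ t ψ)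
    (himp : ∀ φ ψ, t (φ.imp ψ) = t φ ⇨ t ψ) : IsSwapVal (fullCPLe A) (snapshotVal t) :=
  ⟨fun _ => trivial, hand, hor, himp, fun _ => rfl, fun _ => rfl⟩

-- `Set PUnit.{u + 1}` serves as the two-element Boolean algebra in universe `u`.
def truthSet (Δ : Set Form) (ψ : Form) : Set PUnit.{u + 1} :=
  {_x | ψ ∈ Δ}

theorem truthSet_eq_top_iff {Δ : Set Form} {ψ : Form} : truthSet.{u} Δ ψ = ⊤ ↔ ψ ∈ Δ := by
  simp [truthSet, Set.eq_univ_iff_forall]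

theorem IsSaturated.isSwapVal_snapshotVal_truthSet {Δ : Set Form} {φ : Form}
    (hΔ : IsSaturated φ Δ) : IsSwapVal (fullCPLe _) (snapshotVal (truthSet.{u} Δ)) :=
  isSwapVal_fullCPLe_snapshotVal (fun _ _ => Set.ext fun _ => hΔ.and_mem_iff)
    (fun _ _ => Set.ext fun _ => hΔ.or_mem_iff)
    fun _ _ => Set.ext fun _ => by simp [truthSet, hΔ.imp_mem_iff, imp_iff_not_or]

theorem cple_adequacy (Γ : Set Form) (φ : Form) :
    CPLeDeriv Γ φ ↔
      ∀ (A : Type u) [BooleanAlgebra A] (S : SwapStr A) (v : Form → A × A × A),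
        IsSwapVal S v → (∀ γ ∈ Γ, (v γ).1 = ⊤) → (v φ).1 = ⊤ := by
  refine ⟨fun h A _ S v hv hΓ => h.sound hv hΓ, fun h => of_not_not fun hφ => ?_⟩
  obtain ⟨Δ, hΓΔ, hΔ⟩ := exists_isSaturated_superset hφ
  have hφΔ := h _ _ _ hΔ.isSwapVal_snapshotVal_truthSet
    fun γ hγ => truthSet_eq_top_iff.2 (hΓΔ hγ)
  exact hΔ.1 (.prem (truthSet_eq_top_iff.1 hφΔ))
end

section
/- K_mbC = { B ∈ K_{CPL+e} : M(B) validates axiom schema Ax10 (α ∨ ¬α) and axiom schema bc1 (∘α → (α → (¬α → β))) }. That is, a swap structure B for CPL+e over a Boolean algebra A has its domain contained in B_A^{mbC} = {z ∈ A³ : z₁ ∨ z₂ = 1 and z₁ ∧ z₂ ∧ z₃ = 0} if and only if every valuation over the Nmatrix M(B) sends every instance of Ax10 and of bc1 to a designated value. -/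
universe u v w u₂

section Aux

variable {A : Type u} [BooleanAlgebra A]

/-- Pick an element of a multioperation, as an element of the domain. -/
noncomputable def SwapStr.pick (S : SwapStr A) {n : ℕ} (c : SwapSig n)
    (a : Fin n → ↥S.dom) : ↥S.dom :=
  have h := S.op_nonempty c (fun i => (a i : A × A × A)) (fun i => (a i).2)
  ⟨h.choose, (S.op_sub c _ (fun i => (a i).2) h.choose_spec).1⟩

lemma SwapStr.pick_mem (S : SwapStr A) {n : ℕ} (c : SwapSig n) (a : Fin n → ↥S.dom) :
    (S.pick c a : A × A × A) ∈ S.op c (fun i => (a i : A × A × A)) :=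
  (S.op_nonempty c (fun i => (a i : A × A × A)) (fun i => (a i).2)).choose_spec

/-- A canonical valuation extending an assignment of domain elements to variables. -/
noncomputable def SwapStr.mkVal (S : SwapStr A) (f : ℕ → ↥S.dom) : Form → ↥S.dom
  | .var n => f n
  | .and φ ψ => S.pick .and ![S.mkVal f φ, S.mkVal f ψ]
  | .or φ ψ => S.pick .or ![S.mkVal f φ, S.mkVal f ψ]
  | .imp φ ψ => S.pick .imp ![S.mkVal f φ, S.mkVal f ψ]
  | .neg φ => S.pick .neg ![S.mkVal f φ]
  | .circ φ => S.pick .circ ![S.mkVal f φ]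

lemma vec2_coe {x y : ↥(S : SwapStr A).dom} :
    (fun i => ((![x, y] : Fin 2 → ↥S.dom) i : A × A × A)) = ![(x : A × A × A), y] := by
  funext i; fin_cases i <;> rfl

lemma vec1_coe {x : ↥(S : SwapStr A).dom} :
    (fun i => ((![x] : Fin 1 → ↥S.dom) i : A × A × A)) = ![(x : A × A × A)] := by
  funext i; fin_cases i <;> rfl

lemma SwapStr.mkVal_isSwapVal (S : SwapStr A) (f : ℕ → ↥S.dom) :
    IsSwapVal S (fun φ => (S.mkVal f φ : A × A × A)) := by
  refine ⟨fun φ => (S.mkVal f φ).2, ?_, ?_, ?_, ?_, ?_⟩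
  · intro φ ψ
    have := S.pick_mem .and ![S.mkVal f φ, S.mkVal f ψ]
    rwa [vec2_coe] at this
  · intro φ ψ
    have := S.pick_mem .or ![S.mkVal f φ, S.mkVal f ψ]
    rwa [vec2_coe] at this
  · intro φ ψ
    have := S.pick_mem .imp ![S.mkVal f φ, S.mkVal f ψ]
    rwa [vec2_coe] at this
  · intro φ
    have := S.pick_mem .neg ![S.mkVal f φ]
    rwa [vec1_coe] at this
  · intro φ
    have := S.pick_mem .circ ![S.mkVal f φ]
    rwa [vec1_coe] at this

variable {S : SwapStr A} {v : Form → A × A × A}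

lemma fst_or (hv : IsSwapVal S v) (φ ψ : Form) :
    (v (φ.or ψ)).1 = (v φ).1 ⊔ (v ψ).1 := by
  have := (S.op_sub .or ![v φ, v ψ]
    (by intro i; fin_cases i <;> exact hv.mem _) (hv.vor φ ψ)).2
  simpa [swapTgt] using this

lemma fst_imp (hv : IsSwapVal S v) (φ ψ : Form) :
    (v (φ.imp ψ)).1 = (v φ).1 ⇨ (v ψ).1 := by
  have := (S.op_sub .imp ![v φ, v ψ]
    (by intro i; fin_cases i <;> exact hv.mem _) (hv.vimp φ ψ)).2
  simpa [swapTgt] using this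

lemma fst_neg (hv : IsSwapVal S v) (φ : Form) : (v φ.neg).1 = (v φ).2.1 := by
  have := (S.op_sub .neg ![v φ]
    (by intro i; fin_cases i <;> exact hv.mem _) (hv.vneg φ)).2
  simpa [swapTgt] using this

lemma fst_circ (hv : IsSwapVal S v) (φ : Form) : (v φ.circ).1 = (v φ).2.2 := by
  have := (S.op_sub .circ ![v φ]
    (by intro i; fin_cases i <;> exact hv.mem _) (hv.vcirc φ)).2
  simpa [swapTgt] using this

end Aux

theorem kmbc_characterization (A : Type u) [BooleanAlgebra A] (S : SwapStr A) :
    S.dom ⊆ BmbcSet A ↔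
      ∀ v : Form → A × A × A, IsSwapVal S v →
        (∀ α : Form, (v (α.or α.neg)).1 = ⊤) ∧
        (∀ α β : Form, (v (α.circ.imp (α.imp (α.neg.imp β)))).1 = ⊤) := by
  constructor
  · intro hsub v hv
    constructor
    · intro α
      rw [fst_or hv, fst_neg hv]
      exact (hsub (hv.mem α)).1
    · intro α β
      rw [fst_imp hv, fst_imp hv, fst_imp hv, fst_circ hv, fst_neg hv,
        himp_eq_top_iff, le_himp_iff, le_himp_iff]
      have h2 := (hsub (hv.mem α)).2
      have e : (v α).2.2 ⊓ (v α).1 ⊓ (v α).2.1 = ⊥ := by rw [← h2]; ac_rfl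
      rw [e]; exact bot_le
  · intro h z hz
    obtain ⟨z0, hz0, hz0fst⟩ := S.fst_zero
    have hv := S.mkVal_isSwapVal (fun n => if n = 0 then (⟨z, hz⟩ : ↥S.dom) else ⟨z0, hz0⟩)
    obtain ⟨h1, h2⟩ := h _ hv
    constructor
    · have t := h1 (Form.var 0)
      rw [fst_or hv, fst_neg hv] at t
      exact t
    · have t := h2 (Form.var 0) (Form.var 1)
      rw [fst_imp hv, fst_imp hv, fst_imp hv, fst_circ hv, fst_neg hv,
        himp_eq_top_iff, le_himp_iff, le_himp_iff] at t
      have t2 : z.2.2 ⊓ z.1 ⊓ z.2.1 ≤ z0.1 := t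
      rw [hz0fst] at t2
      have hle : z.1 ⊓ z.2.1 ⊓ z.2.2 ≤ ⊥ := le_trans (le_of_eq (by ac_rfl)) t2
      exact le_bot_iff.mp hle
end

section
/- Let F = {A_i : i ∈ I} be a nonempty family of Boolean algebras and let A = Π_{i∈I} A_i be their product Boolean algebra. Then the map f_F : Π_{i∈I} B_{A_i}^{mbC} → B_A^{mbC}, sending a ∈ Π_{i∈I} B_{A_i}^{mbC} to z = (z₁, z₂, z₃) where z_j(i) = π_{(j)}^i(a(i)) for each i ∈ I and 1 ≤ j ≤ 3, is well defined (its values lie in B_A^{mbC}) and is an isomorphism in MAlg(Σ) between the product multialgebra Π_{i∈I} B_{A_i}^{mbC} of the full swap structures for mbC and the full swap structure B_A^{mbC} for mbC over A. -/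
universe u v w u₂

lemma swapTgt_pi_apply {I : Type w} {A : I → Type u} [∀ i, BooleanAlgebra (A i)]
    {n : ℕ} (c : SwapSig n) (a : Fin n → (∀ i, A i) × (∀ i, A i) × (∀ i, A i)) (i : I) :
    swapTgt c a i = swapTgt c (fun k => ((a k).1 i, (a k).2.1 i, (a k).2.2 i)) := by
  cases c <;> rfl

theorem prod_full_swap_iso {I : Type w} [Nonempty I] (A : I → Type u)
    [∀ i, BooleanAlgebra (A i)] :
    ∃ f : (∀ i, ↥(BmbcSet (A i))) → ↥(BmbcSet (∀ i, A i)),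
      (∀ (a : ∀ i, ↥(BmbcSet (A i))) (i : I),
        (f a).1.1 i = (a i).1.1 ∧ (f a).1.2.1 i = (a i).1.2.1 ∧
        (f a).1.2.2 i = (a i).1.2.2) ∧
      MultiAlg.IsIso (MultiAlg.pi fun i => (fullMbc (A i)).toMultiAlg)
        (fullMbc (∀ i, A i)).toMultiAlg f := by
  classical
  refine ⟨fun a => ⟨(fun i => (a i).1.1, fun i => (a i).1.2.1, fun i => (a i).1.2.2), ?_, ?_⟩,
    fun a i => ⟨rfl, rfl, rfl⟩, ?_⟩
  · funext i; exact (a i).2.1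
  · funext i; exact (a i).2.2
  set f : (∀ i, ↥(BmbcSet (A i))) → ↥(BmbcSet (∀ i, A i)) :=
    fun a => ⟨(fun i => (a i).1.1, fun i => (a i).1.2.1, fun i => (a i).1.2.2),
      funext fun i => (a i).2.1, funext fun i => (a i).2.2⟩ with hf
  have hg : ∀ (z : ↥(BmbcSet (∀ i, A i))) (i : I),
      (z.1.1 i, z.1.2.1 i, z.1.2.2 i) ∈ BmbcSet (A i) := by
    intro z i
    exact ⟨congrFun z.2.1 i, congrFun z.2.2 i⟩
  set g : ↥(BmbcSet (∀ i, A i)) → (∀ i, ↥(BmbcSet (A i))) :=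
    fun z i => ⟨(z.1.1 i, z.1.2.1 i, z.1.2.2 i), hg z i⟩ with hgdef
  constructor
  · -- f is a hom
    rintro n c a _ ⟨x, hx, rfl⟩
    refine ⟨(f x).2, ?_⟩
    funext i
    rw [swapTgt_pi_apply]
    exact (hx i).2
  · refine ⟨g, ?_, fun a => funext fun i => Subtype.ext rfl, fun z => Subtype.ext rfl⟩
    rintro n c a _ ⟨z, hz, rfl⟩ i
    refine ⟨hg z i, ?_⟩
    have := congrFun hz.2 i
    rw [swapTgt_pi_apply] at this
    exact this
end

section
/- The category SW_mbC of swap structures for mbC (the full subcategory of MAlg(Σ) whose objects are the swap structures for mbC) has arbitrary products. -/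
universe u v w u₂

namespace SwProdAux

variable {I : Type v} (F : I → MbcSwap.{u})

/-- The `i`-th component of a triple of functions. -/
def comp (z : (∀ i, (F i).base) × (∀ i, (F i).base) × (∀ i, (F i).base)) (i : I) :
    (F i).base × (F i).base × (F i).base :=
  (z.1 i, z.2.1 i, z.2.2 i)

lemma swapTgt_comp {n : ℕ} (c : SwapSig n)
    (a : Fin n → (∀ i, (F i).base) × (∀ i, (F i).base) × (∀ i, (F i).base)) (i : I) :
    swapTgt c a i = swapTgt c fun k => comp F (a k) i := by
  cases c <;> rfl

/-- The product swap structure. -/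
def prodStr : SwapStr (∀ i, (F i).base) where
  dom := {z | ∀ i, comp F z i ∈ (F i).str.dom}
  op := fun {n} c a => {u | ∀ i, comp F u i ∈ (F i).str.op c fun k => comp F (a k) i}
  fst_zero := by
    choose z hz h1 using fun i => (F i).str.fst_zero
    refine ⟨(fun i => (z i).1, fun i => (z i).2.1, fun i => (z i).2.2), fun i => hz i, ?_⟩
    funext i; exact h1 i
  op_nonempty := by
    intro n c a ha
    choose u hu using fun i =>
      (F i).str.op_nonempty c (fun k => comp F (a k) i) (fun k => ha k i)
    exact ⟨(fun i => (u i).1, fun i => (u i).2.1, fun i => (u i).2.2), fun i => hu i⟩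
  op_sub := by
    intro n c a ha u hu
    have h := fun i => (F i).str.op_sub c (fun k => comp F (a k) i) (fun k => ha k i) (hu i)
    refine ⟨fun i => (h i).1, ?_⟩
    have : ∀ i, u.1 i = swapTgt c fun k => comp F (a k) i := fun i => (h i).2
    funext i
    rw [swapTgt_comp]; exact this i

lemma prodStr_mbc : (prodStr F).dom ⊆ BmbcSet (∀ i, (F i).base) := by
  intro z hz
  constructor
  · funext i; exact ((F i).mbc (hz i)).1
  · funext i; exact ((F i).mbc (hz i)).2

/-- The product object in `SW_mbC`. -/
def prodObj : MbcSwap.{max u v} where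
  base := ∀ i, (F i).base
  str := prodStr F
  mbc := prodStr_mbc F

end SwProdAux

theorem sw_mbc_has_products {I : Type v} (F : I → MbcSwap.{u}) :
    ∃ (P : MbcSwap.{max u v}) (p : ∀ i, P.str.toMultiAlg.carrier → (F i).str.toMultiAlg.carrier),
      (∀ i, MultiAlg.IsHom P.str.toMultiAlg (F i).str.toMultiAlg (p i)) ∧
      ∀ (Q : MbcSwap.{w}) (g : ∀ i, Q.str.toMultiAlg.carrier → (F i).str.toMultiAlg.carrier),
        (∀ i, MultiAlg.IsHom Q.str.toMultiAlg (F i).str.toMultiAlg (g i)) →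
        ∃! h : Q.str.toMultiAlg.carrier → P.str.toMultiAlg.carrier,
          MultiAlg.IsHom Q.str.toMultiAlg P.str.toMultiAlg h ∧ ∀ i, p i ∘ h = g i := by
  classical
  refine ⟨SwProdAux.prodObj F, fun i z => ⟨SwProdAux.comp F z.val i, z.2 i⟩, ?_, ?_⟩
  · intro i n c a
    rintro - ⟨x, hx, rfl⟩
    exact hx i
  · intro Q g hg
    refine ⟨fun q => ⟨(fun i => ((g i q).val).1, fun i => ((g i q).val).2.1,
      fun i => ((g i q).val).2.2), fun i => (g i q).2⟩, ⟨?_, ?_⟩, ?_⟩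
    · intro n c a
      rintro - ⟨x, hx, rfl⟩
      intro i
      exact hg i c a ⟨x, hx, rfl⟩
    · intro i
      funext q
      rfl
    · intro h' ⟨hh', hcomm⟩
      funext q
      apply Subtype.ext
      have key : ∀ i, SwProdAux.comp F (h' q).val i = (g i q).val := fun i =>
        congrArg Subtype.val (congrFun (hcomm i) q)
      refine Prod.ext ?_ (Prod.ext ?_ ?_)
      · funext i; exact congrArg Prod.fst (key i)
      · funext i; exact congrArg (fun z => z.2.1) (key i)
      · funext i; exact congrArg (fun z => z.2.2) (key i)
end

section
/- Let f : A → A' be a homomorphism of Boolean algebras. Then the map f_* : B_A^{mbC} → B_{A'}^{mbC} given by f_*(z) = (f(z₁), f(z₂), f(z₃)) is well defined and is a homomorphism of multialgebras from the full swap structure B_A^{mbC} to the full swap structure B_{A'}^{mbC}. Moreover, (f ∘ g)_* = f_* ∘ g_* for composable Boolean algebra homomorphisms f, g, and (id_A)_* = id_{B_A^{mbC}}. Consequently, the assignments A ↦ B_A^{mbC} and f ↦ f_* define a functor K*_{mbC} : BAlg → SW_mbC (the dual Kalman functor). -/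
universe u v w u₂

universe u₃

theorem dual_kalman_functor (A : Type u) (A' : Type u₂) (A'' : Type u₃)
    [BooleanAlgebra A] [BooleanAlgebra A'] [BooleanAlgebra A'']
    (f : BoundedLatticeHom A' A'') (g : BoundedLatticeHom A A') :
    MultiAlg.IsHom (fullMbc A').toMultiAlg (fullMbc A'').toMultiAlg (mapMbc f) ∧
    mapMbc (f.comp g) = mapMbc f ∘ mapMbc g ∧
    mapMbc (BoundedLatticeHom.id A) = id := by
  refine ⟨?_, ?_, ?_⟩
  · intro n c a u hu
    obtain ⟨z, hz, rfl⟩ := hu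
    have hz' : z.val ∈ (fullMbc A').op c fun i => (a i).val := hz
    obtain ⟨hmem, heq⟩ := hz'
    have key : ∀ {m : ℕ} (c : SwapSig m) (b : Fin m → A' × A' × A'),
        f (swapTgt c b) = swapTgt c fun i => ((f (b i).1, f (b i).2.1, f (b i).2.2) : A'' × A'' × A'') := by
      intro m c b
      cases c with
      | and => exact map_inf f _ _
      | or => exact map_sup f _ _
      | imp =>
          show f ((b 0).1 ⇨ (b 1).1) = f (b 0).1 ⇨ f (b 1).1
          rw [himp_eq, himp_eq, map_sup, map_compl']
      | neg => rfl
      | circ => rfl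
    refine ⟨(mapMbc f z).2, ?_⟩
    show f z.val.1 = swapTgt c fun i => (mapMbc f (a i)).val
    rw [heq]
    exact key c _
  · funext z
    rfl
  · funext z
    rfl
end

section
/- (Representation Theorem for K_mbC.) Let B be a swap structure for mbC (over some Boolean algebra). Then there exists a set I and a monomorphism of multialgebras ĥ : B → Π_{i∈I} B_{𝔸₂}^{mbC}, where 𝔸₂ is the two-element Boolean algebra and B_{𝔸₂}^{mbC} is the five-element full swap structure for mbC over 𝔸₂. -/
universe u v w u₂

section Repr

open Order

variable {A : Type u} [BooleanAlgebra A]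

/-- The map to `Bool` induced by a prime ideal: `1` outside, `0` inside. -/
noncomputable def pf (J : Order.Ideal A) : A → Bool :=
  fun a => !(@decide (a ∈ J) (Classical.propDecidable _))

lemma pf_mem {J : Order.Ideal A} {a : A} (h : a ∈ J) : pf J a = false := by
  simp [pf, h]

lemma pf_notMem {J : Order.Ideal A} {a : A} (h : a ∉ J) : pf J a = true := by
  simp [pf, h]

variable {J : Order.Ideal A} (hJ : J.IsPrime)

lemma pf_sup (a b : A) : pf J (a ⊔ b) = pf J a ⊔ pf J b := by
  by_cases ha : a ∈ J <;> by_cases hb : b ∈ J <;>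
    simp [pf, ha, hb, Order.Ideal.sup_mem_iff]

include hJ

lemma pf_inf (a b : A) : pf J (a ⊓ b) = pf J a ⊓ pf J b := by
  have : a ⊓ b ∈ J ↔ a ∈ J ∨ b ∈ J :=
    ⟨hJ.mem_or_mem, fun h => h.elim (fun h => J.lower inf_le_left h)
      (fun h => J.lower inf_le_right h)⟩
  by_cases ha : a ∈ J <;> by_cases hb : b ∈ J <;>
    simp [pf, ha, hb, this]

lemma pf_top : pf J ⊤ = true := pf_notMem hJ.top_notMem

omit hJ in
lemma pf_bot : pf J ⊥ = false := pf_mem J.bot_mem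

lemma pf_compl (a : A) : pf J aᶜ = (pf J a)ᶜ := by
  rcases hJ.mem_or_compl_mem (x := a) with h | h
  · have h' : aᶜ ∉ J := fun h2 => hJ.top_notMem (by
      have := Order.Ideal.sup_mem h h2
      rwa [sup_compl_eq_top] at this)
    simp [pf_mem h, pf_notMem h']
  · have h' : a ∉ J := fun h2 => hJ.top_notMem (by
      have := Order.Ideal.sup_mem h2 h
      rwa [sup_compl_eq_top] at this)
    simp [pf_mem h, pf_notMem h']

lemma pf_himp (a b : A) : pf J (a ⇨ b) = pf J a ⇨ pf J b := by
  rw [himp_eq, himp_eq, pf_sup, pf_compl hJ]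

omit hJ in
/-- Separation: if `¬ x ≤ y` there is a prime ideal containing `y` but not `x`. -/
lemma exists_prime_sep {x y : A} (h : ¬ x ≤ y) :
    ∃ J : Order.Ideal A, J.IsPrime ∧ x ∉ J ∧ y ∈ J := by
  have hd : Disjoint ((Order.PFilter.principal x : Order.PFilter A) : Set A)
      ((Order.Ideal.principal y : Order.Ideal A) : Set A) := by
    rw [Set.disjoint_left]
    intro z hz1 hz2
    exact h (le_trans hz1 hz2)
  obtain ⟨J, hJp, hle, hdisj⟩ := DistribLattice.prime_ideal_of_disjoint_filter_ideal hd
  refine ⟨J, hJp, ?_, hle (Order.Ideal.mem_principal.2 le_rfl)⟩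
  exact fun hx => Set.disjoint_left.1 hdisj (Order.PFilter.mem_principal.2 le_rfl) hx

omit hJ in
lemma pf_eq_all_imp_eq {x y : A}
    (h : ∀ J : Order.Ideal A, J.IsPrime → pf J x = pf J y) : x = y := by
  by_contra hne
  rcases not_and_or.1 (fun hl : x ≤ y ∧ y ≤ x => hne (le_antisymm hl.1 hl.2)) with hl | hl
  · obtain ⟨J, hJ, hx, hy⟩ := exists_prime_sep hl
    have := h J hJ
    rw [pf_notMem hx, pf_mem hy] at this
    exact Bool.noConfusion this
  · obtain ⟨J, hJ, hy, hx⟩ := exists_prime_sep hl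
    have := h J hJ
    rw [pf_mem hx, pf_notMem hy] at this
    exact Bool.noConfusion this

end Repr

noncomputable def repMap {A : Type u} [BooleanAlgebra A] (S : SwapStr A)
    (hS : S.dom ⊆ BmbcSet A) :
    S.toMultiAlg.carrier →
      (MultiAlg.pi fun _ : {J : Order.Ideal A // J.IsPrime} =>
        (fullMbc Bool).toMultiAlg).carrier :=
  fun z J => ⟨(pf J.1 z.1.1, pf J.1 z.1.2.1, pf J.1 z.1.2.2), by
    obtain ⟨h1, h2⟩ := hS z.2
    constructor
    · show pf J.1 z.1.1 ⊔ pf J.1 z.1.2.1 = ⊤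
      rw [← pf_sup, h1, pf_top J.2]
      rfl
    · show pf J.1 z.1.1 ⊓ pf J.1 z.1.2.1 ⊓ pf J.1 z.1.2.2 = ⊥
      rw [← pf_inf J.2, ← pf_inf J.2, h2, pf_bot]
      rfl⟩

theorem representation_theorem_mbc (A : Type u) [BooleanAlgebra A] (S : SwapStr A)
    (hS : S.dom ⊆ BmbcSet A) :
    ∃ (I : Type u) (h : S.toMultiAlg.carrier →
        (MultiAlg.pi fun _ : I => (fullMbc Bool).toMultiAlg).carrier),
      MultiAlg.IsHom S.toMultiAlg (MultiAlg.pi fun _ : I => (fullMbc Bool).toMultiAlg) h ∧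
      Function.Injective h ∧
      MultiAlg.IsMono S.toMultiAlg (MultiAlg.pi fun _ : I => (fullMbc Bool).toMultiAlg) h := by
  classical
  have hhom : MultiAlg.IsHom S.toMultiAlg
      (MultiAlg.pi fun _ : {J : Order.Ideal A // J.IsPrime} =>
        (fullMbc Bool).toMultiAlg) (repMap S hS) := by
    intro n c a
    rintro _ ⟨u, hu, rfl⟩
    intro J
    refine ⟨(repMap S hS u J).2, ?_⟩
    have h1 : u.1.1 = swapTgt c fun i => (a i).1 :=
      (S.op_sub c _ (fun i => (a i).2) hu).2
    show pf J.1 u.1.1 = _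
    rw [h1]
    cases c with
    | and => exact pf_inf J.2 _ _
    | or => exact pf_sup _ _
    | imp => exact pf_himp J.2 _ _
    | neg => rfl
    | circ => rfl
  have hinj : Function.Injective (repMap S hS) := by
    intro z w hzw
    have h' : ∀ (J : Order.Ideal A), J.IsPrime →
        (pf J z.1.1 = pf J w.1.1 ∧ pf J z.1.2.1 = pf J w.1.2.1 ∧
          pf J z.1.2.2 = pf J w.1.2.2) := by
      intro J hJ
      have h2 := congrArg Subtype.val (congrFun hzw ⟨J, hJ⟩)
      exact ⟨congrArg Prod.fst h2, congrArg (fun p => p.2.1) h2,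
        congrArg (fun p => p.2.2) h2⟩
    have e1 := pf_eq_all_imp_eq (x := z.1.1) (y := w.1.1) fun J hJ => (h' J hJ).1
    have e2 := pf_eq_all_imp_eq (x := z.1.2.1) (y := w.1.2.1) fun J hJ => (h' J hJ).2.1
    have e3 := pf_eq_all_imp_eq (x := z.1.2.2) (y := w.1.2.2) fun J hJ => (h' J hJ).2.2
    exact Subtype.ext (Prod.ext e1 (Prod.ext e2 e3))
  exact ⟨_, repMap S hS, hhom, hinj,
    hhom, fun C g h' _ _ hgh => funext fun x => hinj (congrFun hgh x)⟩
end

section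
/- The class K_mbC of swap structures for mbC is not closed under homomorphic images. Concretely: let B_{𝔸₂}^{mbC} be the five-element full swap structure for mbC over the two-element Boolean algebra, with designated elements D = {T, t, t₀} and non-designated elements ND = {F, f₀}, and let Θ be the equivalence relation on its domain with equivalence classes a = {T, F} and b = {t, t₀, f₀}. Then Θ is a multicongruence over B_{𝔸₂}^{mbC}, and in the quotient multialgebra B_{𝔸₂}^{mbC}/Θ every multioperation is trivial: for all x, y ∈ {a, b} and # ∈ {∧, ∨, →}, x # y = ¬x = ∘x = {a, b}; consequently B_{𝔸₂}^{mbC}/Θ is not a swap structure for mbC. -/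
universe u v w u₂

/-- The equivalence relation on the five-element full swap structure for mbC over the
two-element Boolean algebra whose classes are `a = {T, F} = {(1,0,1), (0,1,1)}` (snapshots
with third coordinate `1`) and `b = {t, t₀, f₀} = {(1,1,0), (1,0,0), (0,1,0)}` (snapshots
with third coordinate `0`). -/
def thetaRel : ↥(BmbcSet Bool) → ↥(BmbcSet Bool) → Prop := fun x y => x.1.2.2 = y.1.2.2


lemma mk_mem_bmbc (v w : Bool) : ((v, !v, w) : Bool × Bool × Bool) ∈ BmbcSet Bool := by
  cases v <;> cases w <;> exact ⟨by simp, by simp⟩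

lemma theta_cong : MultiAlg.IsMulticongruence (fullMbc Bool).toMultiAlg thetaRel := by
  refine ⟨⟨fun _ => rfl, fun h => h.symm, fun h h' => h.trans h'⟩, ?_, ?_⟩
  · intro n c a b _ x hx
    refine ⟨⟨(swapTgt c fun i => (b i).val, ! _, x.val.2.2),
      mk_mem_bmbc _ _⟩, ⟨mk_mem_bmbc _ _, rfl⟩, rfl⟩
  · intro c; cases c

lemma quot_op_univ : ∀ {n : ℕ} (c : SwapSig n) (q : Fin n → Quot thetaRel),
    (MultiAlg.quotAlg (fullMbc Bool).toMultiAlg thetaRel).op c q = Set.univ := by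
  intro n c q
  apply Set.eq_univ_iff_forall.mpr
  intro y
  choose a ha using fun i => Quot.exists_rep (q i)
  obtain ⟨z, hz⟩ := Quot.exists_rep y
  set x : ↥(BmbcSet Bool) :=
    ⟨(swapTgt c fun i => (a i).val, ! _, z.val.2.2), mk_mem_bmbc _ _⟩ with hx
  have hrel : thetaRel x z := rfl
  exact ⟨a, ha, x, ⟨mk_mem_bmbc _ _, rfl⟩, by rw [← hz]; exact (Quot.sound hrel).symm⟩

def Ttrip : ↥(BmbcSet Bool) := ⟨(true, false, true), ⟨by simp, by simp⟩⟩
def Ftrip : ↥(BmbcSet Bool) := ⟨(true, false, false), ⟨by simp, by simp⟩⟩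

theorem kmbc_not_closed_under_hom_images :
    MultiAlg.IsMulticongruence (fullMbc Bool).toMultiAlg thetaRel ∧
    (∀ {n : ℕ} (c : SwapSig n) (q : Fin n → Quot thetaRel),
      (MultiAlg.quotAlg (fullMbc Bool).toMultiAlg thetaRel).op c q = Set.univ) ∧
    ¬ ∃ (A : Type w) (bA : BooleanAlgebra A) (S : @SwapStr A bA)
        (_ : S.dom ⊆ @BmbcSet A bA)
        (f : (MultiAlg.quotAlg (fullMbc Bool).toMultiAlg thetaRel).carrier →
          (@SwapStr.toMultiAlg A bA S).carrier),
        MultiAlg.IsIso (MultiAlg.quotAlg (fullMbc Bool).toMultiAlg thetaRel)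
          (@SwapStr.toMultiAlg A bA S) f := by
  refine ⟨theta_cong, fun c q => quot_op_univ c q, ?_⟩
  rintro ⟨A, bA, S, hsub, f, hf, g, -, hgf, -⟩
  have hinj : Function.Injective f := hgf.injective
  set qa : Quot thetaRel := Quot.mk thetaRel Ttrip with hqa
  set qb : Quot thetaRel := Quot.mk thetaRel Ftrip with hqb
  have hqab : qa ≠ qb := by
    intro h
    have := congrArg (Quot.lift (fun x : ↥(BmbcSet Bool) => x.1.2.2)
      (fun _ _ hxy => hxy)) h
    simp [hqa, hqb, Ttrip, Ftrip] at this
  -- key: every f y is in every S-operation applied to values of f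
  have key : ∀ {n : ℕ} (c : SwapSig n) (q' : Fin n → Quot thetaRel) (y : Quot thetaRel),
      (f y).val ∈ S.op c fun i => (f (q' i)).val := by
    intro n c q' y
    have hy : y ∈ (MultiAlg.quotAlg (fullMbc Bool).toMultiAlg thetaRel).op c q' := by
      rw [quot_op_univ]; trivial
    exact hf c q' ⟨y, hy, rfl⟩
  have fst_eq : ∀ {n : ℕ} (c : SwapSig n) (q' : Fin n → Quot thetaRel) (y : Quot thetaRel),
      (f y).val.1 = swapTgt c fun i => (f (q' i)).val :=
    fun c q' y => (S.op_sub c _ (fun i => (f (q' i)).2) (key c q' y)).2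
  set wa := f qa with hwa
  set wb := f qb with hwb
  -- from imp: first coordinates are ⊤
  have h1 : wa.val.1 = ⊤ := by
    have := fst_eq .imp ![qa, qa] qa
    simpa [swapTgt] using this
  have h1b : wb.val.1 = ⊤ := by
    have := fst_eq .imp ![qa, qa] qb
    simpa [swapTgt] using this
  -- from neg: (wa).2.1 = ⊤
  have h2 : wa.val.2.1 = ⊤ := by
    have := fst_eq .neg ![qa] qa
    simp [swapTgt] at this
    rw [← this, h1]
  -- from circ: (wa).2.2 = ⊤
  have h3 : wa.val.2.2 = ⊤ := by
    have := fst_eq .circ ![qa] qa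
    simp [swapTgt] at this
    rw [← this, h1]
  have hmem : wa.val ∈ BmbcSet A := hsub wa.2
  have htb : (⊤ : A) = ⊥ := by
    have := hmem.2
    rw [h1, h2, h3] at this
    simpa using this
  haveI : Subsingleton A :=
    ⟨fun x y => le_antisymm (le_top.trans (htb.le.trans bot_le))
      (le_top.trans (htb.le.trans bot_le))⟩
  exact hqab (hinj (Subtype.ext (Subsingleton.elim wa.val wb.val)))
end
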